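/- arXiv:2601.07502 — 3 statements merged into one kernel-verified Lean document; each statement's English description precedes it below -/
import Mathlib

section
/- In the multidimensional elephant random walk with stops, if 1/2 < r ≤ 1, then Z_n*/n^r converges to 0 almost surely as n → ∞. -/
/-!
Almost surely every step `X_k` is either `0` or a unit vector: a stop (`A_{n+1} = 0`) kills the
step, and the other values `± J_d ^ m` of `A_{n+1}` permute and flip coordinates. Hence `Z_n*`
counts the non-zero steps, and independence of `A_{n+1}`, `β(n)` and `G_n` gives
`P(X_{n+1} ≠ 0) = (1 - r)/n · E Z_n*`, so that `E Z_n* = a_n ≤ e^{1-r} n^{1-r}`. By Markov's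
inequality `P(Z*_{2^j} ≥ ε 2^{jr}) = O(2^{j(1-2r)})`, which is summable as `r > 1/2`; Borel–Cantelli
along `n = 2^j` and the monotonicity of `Z_n*` in between give the result.
-/

open MeasureTheory ProbabilityTheory Filter

noncomputable section

/-- The `d × d` cyclic permutation matrix `J_d` with ones on the superdiagonal and in
position `(d, 1)`. -/
def cyclicMatrix (d : ℕ) : Matrix (Fin d) (Fin d) ℝ :=
  Matrix.of fun i j => if (j : ℕ) = ((i : ℕ) + 1) % d then 1 else 0

/-- A matrix is measurable entrywise. -/
instance {m n : Type*} : MeasurableSpace (Matrix m n ℝ) :=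
  inferInstanceAs (MeasurableSpace (m → n → ℝ))

/-- The multidimensional elephant random walk with stops, with memory parameters
`p`, `q`, `r` satisfying `p + (2d-1)q + r = 1`. -/
structure MERWStops {Ω : Type*} [MeasurableSpace Ω] (P : Measure Ω)
    (d : ℕ) (p q r : ℝ) where
  X : ℕ → Ω → EuclideanSpace ℝ (Fin d)
  A : ℕ → Ω → Matrix (Fin d) (Fin d) ℝ
  β : ℕ → Ω → ℕ
  hd : 1 ≤ d
  hp : p ∈ Set.Icc (0 : ℝ) 1
  hq : q ∈ Set.Icc (0 : ℝ) 1
  hr : r ∈ Set.Icc (0 : ℝ) 1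
  hpqr : p + (2 * (d : ℝ) - 1) * q + r = 1
  measX : ∀ n, Measurable (X n)
  measA : ∀ n, Measurable (A n)
  measβ : ∀ n, Measurable (β n)
  /-- `X 1` is uniformly distributed on `{± e_1, …, ± e_d}`. -/
  hX1 : ∀ i : Fin d,
    P {ω | X 1 ω = EuclideanSpace.single i (1 : ℝ)} = ENNReal.ofReal (1 / (2 * (d : ℝ))) ∧
    P {ω | X 1 ω = -EuclideanSpace.single i (1 : ℝ)} = ENNReal.ofReal (1 / (2 * (d : ℝ)))
  /-- The recursion `X (n+1) = A (n+1) * X (β n)`. -/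
  hrec : ∀ n, 1 ≤ n → ∀ ω, ∀ i, X (n + 1) ω i = ∑ j, A (n + 1) ω i j * X (β n ω) ω j
  /-- `β n` is uniformly distributed on `{1, …, n}`. -/
  hβ : ∀ n, 1 ≤ n → ∀ k ∈ Finset.Icc 1 n, P {ω | β n ω = k} = ENNReal.ofReal (1 / (n : ℝ))
  hAI : ∀ n, 1 ≤ n → P {ω | A (n + 1) ω = 1} = ENNReal.ofReal p
  hAnegI : ∀ n, 1 ≤ n → P {ω | A (n + 1) ω = -1} = ENNReal.ofReal q
  hAJ : ∀ n, 1 ≤ n → ∀ i ∈ Finset.Icc 1 (d - 1),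
    P {ω | A (n + 1) ω = cyclicMatrix d ^ i} = ENNReal.ofReal q
  hAnegJ : ∀ n, 1 ≤ n → ∀ i ∈ Finset.Icc 1 (d - 1),
    P {ω | A (n + 1) ω = -(cyclicMatrix d ^ i)} = ENNReal.ofReal q
  hAzero : ∀ n, 1 ≤ n → P {ω | A (n + 1) ω = 0} = ENNReal.ofReal r
  /-- `A (n+1)`, `β n` and `σ(X_1, …, X_n)` are mutually independent. -/
  hindep : ∀ n, 1 ≤ n →
    iIndep
      ![MeasurableSpace.comap (A (n + 1)) inferInstance,
        MeasurableSpace.comap (β n) inferInstance,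
        ⨆ k ∈ Finset.Icc 1 n, MeasurableSpace.comap (X k) inferInstance] P

namespace MERWStops

variable {Ω : Type*} [MeasurableSpace Ω] {P : Measure Ω} {d : ℕ} {p q r : ℝ}

/-- The number of moves up to time `n` : `Z_n* = ∑_{k=1}^n ‖X_k‖²`. -/
def Zstar (W : MERWStops P d p q r) (n : ℕ) (ω : Ω) : ℝ :=
  ∑ k ∈ Finset.Icc 1 n, ‖W.X k ω‖ ^ 2

/-- The σ-field `G_n = σ(X_1, …, X_n)`. -/
def G (W : MERWStops P d p q r) (n : ℕ) : MeasurableSpace Ω :=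
  ⨆ k ∈ Finset.Icc 1 n, MeasurableSpace.comap (W.X k) inferInstance

/-- The normalizing sequence `a_1 = 1`, `a_n = ∏_{k=1}^{n-1} (1 + (1-r)/k)`. -/
def aseq (r : ℝ) (n : ℕ) : ℝ :=
  ∏ k ∈ Finset.Icc 1 (n - 1), (1 + (1 - r) / (k : ℝ))

end MERWStops

instance {m n : Type*} [Countable m] [Countable n] : MeasurableSingletonClass (Matrix m n ℝ) :=
  inferInstanceAs (MeasurableSingletonClass (m → n → ℝ))

open scoped ENNReal

section Probability

variable {Ω : Type*} [MeasurableSpace Ω] {μ : Measure Ω}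

theorem ProbabilityTheory.iIndep.measure_inter_inter {m : Fin 3 → MeasurableSpace Ω}
    (h : iIndep m μ) {s₀ s₁ s₂ : Set Ω} (h₀ : MeasurableSet[m 0] s₀) (h₁ : MeasurableSet[m 1] s₁)
    (h₂ : MeasurableSet[m 2] s₂) :
    μ (s₀ ∩ s₁ ∩ s₂) = μ s₀ * μ s₁ * μ s₂ := by
  have key := h.meas_iInter (s := ![s₀, s₁, s₂]) (fun i => by fin_cases i <;> assumption)
  have hI : ⋂ i, ![s₀, s₁, s₂] i = s₀ ∩ s₁ ∩ s₂ := by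
    ext ω; simp [Fin.forall_fin_succ, and_assoc]
  rw [hI, Fin.prod_univ_three] at key
  simpa [mul_assoc] using key

theorem ae_mem_of_sum_measure_preimage_singleton_eq_one [IsProbabilityMeasure μ] {β : Type*}
    [MeasurableSpace β] [MeasurableSingletonClass β] {f : Ω → β} (hf : Measurable f)
    (s : Finset β) (h : ∑ y ∈ s, μ (f ⁻¹' {y}) = 1) : ∀ᵐ ω ∂μ, f ω ∈ s := by
  rw [sum_measure_preimage_singleton s fun y _ => hf (measurableSet_singleton y)] at h
  refine (ae_iff_measure_eq (hf s.measurableSet).nullMeasurableSet).2 ?_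
  rw [measure_univ]
  exact h

theorem ae_eventually_lt_of_summable_integral_div [IsFiniteMeasure μ] {f : ℕ → Ω → ℝ}
    {c : ℕ → ℝ} (hf₀ : ∀ j, 0 ≤ᵐ[μ] f j) (hf : ∀ j, Integrable (f j) μ) (hc : ∀ j, 0 < c j)
    (hs : Summable fun j => (∫ ω, f j ω ∂μ) / c j) :
    ∀ᵐ ω ∂μ, ∀ᶠ j in atTop, f j ω < c j := by
  have markov : ∀ j, μ {ω | c j ≤ f j ω} ≤ ENNReal.ofReal ((∫ ω, f j ω ∂μ) / c j) := by
    intro j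
    rw [← ofReal_measureReal]
    gcongr
    rw [le_div_iff₀' (hc j)]
    exact mul_meas_ge_le_integral_of_nonneg (hf₀ j) (hf j) (c j)
  have hfin : ∑' j, μ {ω | c j ≤ f j ω} ≠ ∞ := by
    refine ne_top_of_le_ne_top ?_ (ENNReal.tsum_le_tsum markov)
    rw [← ENNReal.ofReal_tsum_of_nonneg
      (fun j => div_nonneg (integral_nonneg_of_ae (hf₀ j)) (hc j).le) hs]
    exact ENNReal.ofReal_ne_top
  filter_upwards [ae_eventually_notMem hfin] with ω hω
  simpa using hω

theorem ae_forall_pos_eventually_lt_mul_of_summable_integral_div [IsFiniteMeasure μ]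
    {f : ℕ → Ω → ℝ} {g : ℕ → ℝ} (hf₀ : ∀ j, 0 ≤ᵐ[μ] f j) (hf : ∀ j, Integrable (f j) μ)
    (hg : ∀ j, 0 < g j) (hs : Summable fun j => (∫ ω, f j ω ∂μ) / g j) :
    ∀ᵐ ω ∂μ, ∀ ε > 0, ∀ᶠ j in atTop, f j ω < ε * g j := by
  have h : ∀ m : ℕ, ∀ᵐ ω ∂μ, ∀ᶠ j in atTop, f j ω < 1 / (m + 1) * g j := by
    intro m
    refine ae_eventually_lt_of_summable_integral_div hf₀ hf
      (fun j => by have := hg j; positivity) ?_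
    refine (hs.mul_left ((m : ℝ) + 1)).congr fun j => ?_
    have := hg j
    field_simp
  filter_upwards [ae_all_iff.2 h] with ω hω ε hε
  obtain ⟨m, hm⟩ := exists_nat_one_div_lt hε
  filter_upwards [hω m] with j hj
  exact hj.trans_le (by have := hg j; gcongr)

end Probability

theorem tendsto_div_rpow_zero_of_monotone_of_two_pow {f : ℕ → ℝ} (hf : Monotone f)
    (hf₀ : ∀ n, 0 ≤ f n) {r : ℝ} (hr : 0 ≤ r)
    (h : ∀ ε > 0, ∀ᶠ j in atTop, f (2 ^ j) < ε * ((2 ^ j : ℕ) : ℝ) ^ r) :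
    Tendsto (fun n : ℕ => f n / (n : ℝ) ^ r) atTop (nhds 0) := by
  have bound : ∀ ε > 0, ∀ᶠ n : ℕ in atTop, f n / (n : ℝ) ^ r ≤ ε * 2 ^ r := by
    intro ε hε
    obtain ⟨J, hJ⟩ := eventually_atTop.1 (h ε hε)
    filter_upwards [eventually_ge_atTop (2 ^ J)] with n hn
    have hn₀ : n ≠ 0 := ((Nat.two_pow_pos J).trans_le hn).ne'
    set j := Nat.log 2 n
    have hJj : J ≤ j + 1 := by
      have := Nat.le_log_of_pow_le one_lt_two hn
      omega
    have hnpos : (0 : ℝ) < n := by positivity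
    have hlt : n ≤ 2 ^ (j + 1) := (Nat.lt_pow_succ_log_self one_lt_two n).le
    have hle : ((2 ^ j : ℕ) : ℝ) ≤ n := by exact_mod_cast Nat.pow_log_le_self 2 hn₀
    rw [div_le_iff₀ (by positivity)]
    calc f n ≤ f (2 ^ (j + 1)) := hf hlt
      _ ≤ ε * ((2 ^ (j + 1) : ℕ) : ℝ) ^ r := (hJ _ hJj).le
      _ = ε * 2 ^ r * ((2 ^ j : ℕ) : ℝ) ^ r := by
        push_cast
        rw [pow_succ, Real.mul_rpow (by positivity) (by positivity)]
        ring
      _ ≤ ε * 2 ^ r * (n : ℝ) ^ r := by gcongr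
  rw [tendsto_order]
  refine ⟨fun a ha => Eventually.of_forall fun n => ha.trans_le (by
    have := hf₀ n; positivity), fun a ha => ?_⟩
  have h2r : (0 : ℝ) < 2 ^ r := by positivity
  filter_upwards [bound (a / 2 / 2 ^ r) (by positivity)] with n hn
  calc f n / (n : ℝ) ^ r ≤ a / 2 / 2 ^ r * 2 ^ r := hn
    _ < a := by rw [div_mul_cancel₀ _ h2r.ne']; linarith

section Moves

open Matrix Fin.NatCast

variable {d : ℕ}

theorem cyclicMatrix_mulVec [NeZero d] (v : Fin d → ℝ) :
    cyclicMatrix d *ᵥ v = fun i => v (i + 1) := by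
  ext i
  have hj : ∀ j : Fin d, (j : ℕ) = ((i : ℕ) + 1) % d ↔ j = i + 1 := by
    intro j
    rw [Fin.ext_iff, Fin.val_add, Fin.val_one', Nat.add_mod_mod]
  simp [Matrix.mulVec, dotProduct, cyclicMatrix, hj]

theorem cyclicMatrix_pow_mulVec [NeZero d] (m : ℕ) (v : Fin d → ℝ) :
    cyclicMatrix d ^ m *ᵥ v = fun i => v (i + (m : Fin d)) := by
  induction m generalizing v with
  | zero => simp
  | succ m ih =>
    rw [pow_succ, ← Matrix.mulVec_mulVec, cyclicMatrix_mulVec, ih]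
    ext i
    simp [add_assoc]

def signedCyclic (d : ℕ) (bm : Bool × Fin d) : Matrix (Fin d) (Fin d) ℝ :=
  if bm.1 then -(cyclicMatrix d ^ (bm.2 : ℕ)) else cyclicMatrix d ^ (bm.2 : ℕ)

theorem signedCyclic_mulVec_apply (bm : Bool × Fin d) (v : Fin d → ℝ) (i : Fin d) :
    (signedCyclic d bm *ᵥ v) i = (if bm.1 then -1 else 1) * v (i + bm.2) := by
  have : NeZero d := NeZero.of_pos bm.2.pos
  obtain ⟨b, m⟩ := bm
  cases b <;> simp [signedCyclic, Matrix.neg_mulVec, cyclicMatrix_pow_mulVec]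

theorem signedCyclic_injective : Function.Injective (signedCyclic d) := by
  rintro ⟨b, m⟩ ⟨b', m'⟩ h
  have : NeZero d := NeZero.of_pos m.pos
  -- in coordinate `0`, `± J_d ^ m` maps `v i = i + 1` to `± (m + 1)`
  have key := congrFun (congrArg (· *ᵥ fun i : Fin d => (i : ℝ) + 1) h) 0
  simp only [signedCyclic_mulVec_apply, zero_add] at key
  have hm : (0 : ℝ) < (m : ℝ) + 1 := by positivity
  have hm' : (0 : ℝ) < (m' : ℝ) + 1 := by positivity
  cases b <;> cases b' <;> simp at key
  · rw [Fin.ext (by exact_mod_cast key : (m : ℕ) = m')]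
  · linarith
  · linarith
  · rw [Fin.ext (by exact_mod_cast key : (m : ℕ) = m')]

theorem signedCyclic_ne_zero (bm : Bool × Fin d) : signedCyclic d bm ≠ 0 := by
  intro h
  have : NeZero d := NeZero.of_pos bm.2.pos
  have key := congrFun (congrArg (· *ᵥ fun _ : Fin d => (1 : ℝ)) h) 0
  cases hb : bm.1 <;> simp [signedCyclic_mulVec_apply, hb] at key

theorem sum_sq_signedCyclic_mulVec (bm : Bool × Fin d) (v : Fin d → ℝ) :
    ∑ i, (signedCyclic d bm *ᵥ v) i ^ 2 = ∑ i, v i ^ 2 := by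
  have : NeZero d := NeZero.of_pos bm.2.pos
  simp only [signedCyclic_mulVec_apply, mul_pow]
  rw [show (if bm.1 then (-1 : ℝ) else 1) ^ 2 = 1 by split_ifs <;> norm_num]
  simp only [one_mul]
  exact Equiv.sum_comp (Equiv.addRight bm.2) fun i => v i ^ 2

-- The values of `A_{n+1}` other than the stop `0`.
def moves (d : ℕ) : Finset (Matrix (Fin d) (Fin d) ℝ) :=
  Finset.univ.image (signedCyclic d)

theorem zero_notMem_moves : (0 : Matrix (Fin d) (Fin d) ℝ) ∉ moves d := by
  simpa [moves, eq_comm] using signedCyclic_ne_zero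

end Moves

namespace MERWStops

open Matrix Finset

variable {Ω : Type*} [MeasurableSpace Ω] {P : Measure Ω} {d : ℕ} {p q r : ℝ}
  (W : MERWStops P d p q r)

@[simp]
theorem aseq_one : aseq r 1 = 1 := by simp [aseq]

theorem aseq_succ {n : ℕ} (hn : 1 ≤ n) : aseq r (n + 1) = aseq r n * (1 + (1 - r) / n) := by
  obtain ⟨m, rfl⟩ := Nat.exists_eq_add_of_le' hn
  simp only [aseq, Nat.add_sub_cancel]
  rw [Finset.prod_Icc_succ_top (by omega)]

theorem aseq_nonneg (hr : r ≤ 1) (n : ℕ) : 0 ≤ aseq r n :=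
  Finset.prod_nonneg fun k _ => add_nonneg zero_le_one (div_nonneg (by linarith) k.cast_nonneg)

theorem aseq_le_exp_mul_rpow (hr : r ≤ 1) {n : ℕ} (hn : 1 ≤ n) :
    aseq r n ≤ Real.exp (1 - r) * (n : ℝ) ^ (1 - r) := by
  have hlog : Real.log (n - 1 : ℕ) ≤ Real.log n := by
    rcases Nat.eq_zero_or_pos (n - 1) with h | h
    · rw [h, Nat.cast_zero, Real.log_zero]
      exact Real.log_natCast_nonneg n
    · exact Real.log_le_log (by exact_mod_cast h) (by exact_mod_cast Nat.sub_le n 1)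
  have hharm : ∑ k ∈ Finset.Icc 1 (n - 1), (k : ℝ)⁻¹ ≤ 1 + Real.log n := by
    have := harmonic_le_one_add_log (n - 1)
    rw [harmonic_eq_sum_Icc] at this
    push_cast at this
    linarith
  calc aseq r n ≤ ∏ k ∈ Finset.Icc 1 (n - 1), Real.exp ((1 - r) * (k : ℝ)⁻¹) := by
        refine Finset.prod_le_prod (fun k _ => by positivity) fun k _ => ?_
        rw [← div_eq_mul_inv, add_comm]
        exact Real.add_one_le_exp _
    _ = Real.exp ((1 - r) * ∑ k ∈ Finset.Icc 1 (n - 1), (k : ℝ)⁻¹) := by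
        rw [Finset.mul_sum, Real.exp_sum]
    _ ≤ Real.exp ((1 - r) * (1 + Real.log n)) := by
        gcongr
    _ = Real.exp (1 - r) * (n : ℝ) ^ (1 - r) := by
        rw [Real.rpow_def_of_pos (by positivity), mul_add, mul_one, Real.exp_add, mul_comm (1 - r)]

theorem summable_aseq_two_pow_div_rpow (hr : 1 / 2 < r) (hr1 : r ≤ 1) :
    Summable fun j : ℕ => aseq r (2 ^ j) / ((2 ^ j : ℕ) : ℝ) ^ r := by
  have hρ : (2 : ℝ) ^ (1 - 2 * r) < 1 := Real.rpow_lt_one_of_one_lt_of_neg one_lt_two (by linarith)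
  refine Summable.of_nonneg_of_le (fun j => ?_) (fun j => ?_)
    ((summable_geometric_of_lt_one (by positivity) hρ).mul_left (Real.exp (1 - r)))
  · have := aseq_nonneg hr1 (2 ^ j)
    positivity
  · calc aseq r (2 ^ j) / ((2 ^ j : ℕ) : ℝ) ^ r
        ≤ Real.exp (1 - r) * ((2 ^ j : ℕ) : ℝ) ^ (1 - r) / ((2 ^ j : ℕ) : ℝ) ^ r := by
          gcongr
          exact aseq_le_exp_mul_rpow hr1 Nat.one_le_two_pow
      _ = Real.exp (1 - r) * (2 ^ (1 - 2 * r)) ^ j := by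
          rw [mul_div_assoc, ← Real.rpow_sub (by positivity), Real.rpow_pow_comm zero_le_two]
          push_cast
          ring_nf

theorem neZero (W : MERWStops P d p q r) : NeZero d := ⟨by have := W.hd; omega⟩

theorem Zstar_nonneg (n : ℕ) (ω : Ω) : 0 ≤ W.Zstar n ω :=
  sum_nonneg fun _ _ => sq_nonneg _

theorem monotone_Zstar (ω : Ω) : Monotone fun n => W.Zstar n ω := fun _ _ h =>
  sum_le_sum_of_subset_of_nonneg (Icc_subset_Icc_right h) fun _ _ _ => sq_nonneg _

theorem measurableSet_X_ne_zero (k : ℕ) : MeasurableSet {ω | W.X k ω ≠ 0} :=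
  W.measX k (measurableSet_singleton 0).compl

theorem X_succ_apply {n : ℕ} (hn : 1 ≤ n) (ω : Ω) (i : Fin d) :
    W.X (n + 1) ω i = (W.A (n + 1) ω *ᵥ (W.X (W.β n ω) ω).ofLp) i :=
  W.hrec n hn ω i

theorem X_succ_eq_zero {n : ℕ} (hn : 1 ≤ n) {ω : Ω} (hA : W.A (n + 1) ω = 0) :
    W.X (n + 1) ω = 0 := by
  ext i
  simp [W.X_succ_apply hn, hA]

theorem norm_X_succ {n : ℕ} (hn : 1 ≤ n) {ω : Ω} (hA : W.A (n + 1) ω ∈ moves d) :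
    ‖W.X (n + 1) ω‖ = ‖W.X (W.β n ω) ω‖ := by
  obtain ⟨bm, -, hbm⟩ := Finset.mem_image.1 hA
  simp only [EuclideanSpace.norm_eq, Real.norm_eq_abs, sq_abs, W.X_succ_apply hn, ← hbm,
    sum_sq_signedCyclic_mulVec]

theorem X_succ_ne_zero_iff {n : ℕ} (hn : 1 ≤ n) {ω : Ω}
    (hA : W.A (n + 1) ω ∈ insert 0 (moves d)) :
    W.X (n + 1) ω ≠ 0 ↔ W.A (n + 1) ω ∈ moves d ∧ W.X (W.β n ω) ω ≠ 0 := by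
  rcases Finset.mem_insert.1 hA with hA | hA
  · simp [W.X_succ_eq_zero hn hA, hA, zero_notMem_moves]
  · rw [← norm_ne_zero_iff, W.norm_X_succ hn hA, norm_ne_zero_iff]
    exact ⟨fun h => ⟨hA, h⟩, And.right⟩

theorem measure_A_eq_signedCyclic [NeZero d] {n : ℕ} (hn : 1 ≤ n) (bm : Bool × Fin d) :
    P (W.A (n + 1) ⁻¹' {signedCyclic d bm})
      = ENNReal.ofReal (if bm = (false, 0) then p else q) := by
  obtain ⟨b, m⟩ := bm
  by_cases hm : m = 0
  · subst hm
    cases b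
    · simp only [signedCyclic, Fin.val_zero, pow_zero, if_true]
      exact W.hAI n hn
    · simp only [signedCyclic, Fin.val_zero, pow_zero, if_true]
      exact W.hAnegI n hn
  · have hmem : (m : ℕ) ∈ Icc 1 (d - 1) := by
      have := Fin.val_ne_zero_iff.2 hm
      have := m.isLt
      simp only [Finset.mem_Icc]
      omega
    cases b
    · simp only [signedCyclic, Bool.false_eq_true, if_false, Prod.mk.injEq, true_and, hm]
      exact W.hAJ n hn m hmem
    · simp only [signedCyclic, if_true, Prod.mk.injEq, Bool.true_eq_false, false_and]
      exact W.hAnegJ n hn m hmem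

theorem measure_A_mem_moves {n : ℕ} (hn : 1 ≤ n) :
    P (W.A (n + 1) ⁻¹' moves d) = ENNReal.ofReal (1 - r) := by
  have := W.neZero
  rw [← sum_measure_preimage_singleton _ fun M _ => W.measA _ (measurableSet_singleton M), moves,
    sum_image fun x _ y _ h => signedCyclic_injective h]
  simp only [W.measure_A_eq_signedCyclic hn]
  rw [← ENNReal.ofReal_sum_of_nonneg fun bm _ => by split_ifs; exacts [W.hp.1, W.hq.1]]
  congr 1
  have hsplit : ∀ bm : Bool × Fin d,
      (if bm = (false, 0) then p else q) = q + if bm = (false, 0) then p - q else 0 := by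
    intro bm; split_ifs <;> ring
  simp only [hsplit, sum_add_distrib, sum_ite_eq', mem_univ, if_true, sum_const, card_univ,
    Fintype.card_prod, Fintype.card_bool, Fintype.card_fin, nsmul_eq_mul]
  push_cast
  linarith [W.hpqr]

theorem measure_inter_inter_X_ne_zero {n k : ℕ} (hn : 1 ≤ n) (hk : k ∈ Icc 1 n)
    {s : Set (Matrix (Fin d) (Fin d) ℝ)} (hs : MeasurableSet s) :
    P (W.A (n + 1) ⁻¹' s ∩ W.β n ⁻¹' {k} ∩ {ω | W.X k ω ≠ 0})
      = P (W.A (n + 1) ⁻¹' s) * P (W.β n ⁻¹' {k}) * P {ω | W.X k ω ≠ 0} :=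
  (W.hindep n hn).measure_inter_inter (comap_measurable _ hs)
    (comap_measurable _ (measurableSet_singleton k))
    (le_iSup₂ (f := fun j (_ : j ∈ Icc 1 n) => MeasurableSpace.comap (W.X j) inferInstance) k hk
      _ (comap_measurable _ (measurableSet_singleton 0).compl))

variable [IsProbabilityMeasure P]

theorem ae_A_mem_insert_zero_moves {n : ℕ} (hn : 1 ≤ n) :
    ∀ᵐ ω ∂P, W.A (n + 1) ω ∈ insert 0 (moves d) := by
  have hzero : P (W.A (n + 1) ⁻¹' {0}) = ENNReal.ofReal r := W.hAzero n hn
  refine ae_mem_of_sum_measure_preimage_singleton_eq_one (W.measA _) _ ?_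
  rw [sum_insert zero_notMem_moves,
    sum_measure_preimage_singleton _ fun M _ => W.measA _ (measurableSet_singleton M),
    W.measure_A_mem_moves hn, hzero, ← ENNReal.ofReal_add W.hr.1 (by linarith [W.hr.2])]
  simp

theorem ae_β_mem_Icc {n : ℕ} (hn : 1 ≤ n) : ∀ᵐ ω ∂P, W.β n ω ∈ Icc 1 n := by
  have hβ : ∀ k ∈ Icc 1 n, P (W.β n ⁻¹' {k}) = ENNReal.ofReal (1 / n) := W.hβ n hn
  refine ae_mem_of_sum_measure_preimage_singleton_eq_one (W.measβ n) _ ?_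
  rw [sum_congr rfl hβ, sum_const, Nat.card_Icc, Nat.add_sub_cancel, nsmul_eq_mul,
    ← ENNReal.ofReal_natCast, ← ENNReal.ofReal_mul (by positivity),
    mul_one_div_cancel (by positivity),
    ENNReal.ofReal_one]

theorem ae_norm_X_one : ∀ᵐ ω ∂P, ‖W.X 1 ω‖ = 1 := by
  let e : Bool × Fin d → EuclideanSpace ℝ (Fin d) := fun bi =>
    if bi.1 then -EuclideanSpace.single bi.2 1 else EuclideanSpace.single bi.2 1
  have he : Function.Injective e := by
    rintro ⟨b, i⟩ ⟨b', i'⟩ h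
    have key := congrArg (fun x : EuclideanSpace ℝ (Fin d) => x i) h
    by_cases hi : i = i'
    · subst hi
      cases b <;> cases b' <;> simp [e] at key ⊢ <;> norm_num at key
    · cases b <;> cases b' <;> simp [e, hi] at key
  have hprob : ∀ bi, P (W.X 1 ⁻¹' {e bi}) = ENNReal.ofReal (1 / (2 * d)) := by
    rintro ⟨b, i⟩
    cases b
    exacts [(W.hX1 i).1, (W.hX1 i).2]
  have h2d : (0 : ℝ) < 2 * d := by have := W.hd; positivity
  have hmem : ∀ᵐ ω ∂P, W.X 1 ω ∈ univ.image e := by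
    refine ae_mem_of_sum_measure_preimage_singleton_eq_one (W.measX 1) _ ?_
    rw [sum_image fun x _ y _ h => he h, sum_congr rfl fun bi _ => hprob bi, sum_const, card_univ,
      Fintype.card_prod, Fintype.card_bool, Fintype.card_fin, nsmul_eq_mul,
      ← ENNReal.ofReal_natCast, ← ENNReal.ofReal_mul (by positivity)]
    push_cast
    rw [mul_one_div_cancel h2d.ne', ENNReal.ofReal_one]
  filter_upwards [hmem] with ω hω
  obtain ⟨⟨b, i⟩, -, hbi⟩ := Finset.mem_image.1 hω
  rw [← hbi]
  cases b <;> simp [e]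

theorem ae_norm_X_eq_zero_or_one :
    ∀ᵐ ω ∂P, ∀ k, 1 ≤ k → ‖W.X k ω‖ = 0 ∨ ‖W.X k ω‖ = 1 := by
  have hsteps := ae_all_iff.2 fun n => (W.ae_A_mem_insert_zero_moves (n := n + 1) (by omega)).and
    (W.ae_β_mem_Icc (n := n + 1) (by omega))
  filter_upwards [W.ae_norm_X_one, hsteps] with ω h₁ hstep k hk
  induction k using Nat.strong_induction_on with
  | _ k ih =>
    match k, hk with
    | 1, _ => exact Or.inr h₁
    | n + 2, _ =>
      obtain ⟨hA, hβ⟩ := hstep n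
      obtain ⟨hβ₁, hβn⟩ := Finset.mem_Icc.1 hβ
      rcases Finset.mem_insert.1 hA with hA | hA
      · exact Or.inl (by rw [W.X_succ_eq_zero (by omega) hA, norm_zero])
      · rw [W.norm_X_succ (by omega) hA]
        exact ih _ (by omega) hβ₁

theorem norm_sq_X_ae_eq_indicator {k : ℕ} (hk : 1 ≤ k) :
    (fun ω => ‖W.X k ω‖ ^ 2) =ᵐ[P] {ω | W.X k ω ≠ 0}.indicator 1 := by
  filter_upwards [W.ae_norm_X_eq_zero_or_one] with ω hω
  rcases hω k hk with h | h
  · simp [norm_eq_zero.1 h]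
  · have hne : W.X k ω ≠ 0 := norm_ne_zero_iff.1 (by rw [h]; exact one_ne_zero)
    rw [Set.indicator_of_mem (show ω ∈ {ω | W.X k ω ≠ 0} from hne), h]
    simp

theorem integrable_norm_sq_X {k : ℕ} (hk : 1 ≤ k) : Integrable (fun ω => ‖W.X k ω‖ ^ 2) P :=
  ((integrable_const 1).indicator (W.measurableSet_X_ne_zero k)).congr
    (W.norm_sq_X_ae_eq_indicator hk).symm

theorem integral_norm_sq_X {k : ℕ} (hk : 1 ≤ k) :
    ∫ ω, ‖W.X k ω‖ ^ 2 ∂P = P.real {ω | W.X k ω ≠ 0} := by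
  rw [integral_congr_ae (W.norm_sq_X_ae_eq_indicator hk),
    integral_indicator_one (W.measurableSet_X_ne_zero k)]

theorem measure_X_succ_ne_zero {n : ℕ} (hn : 1 ≤ n) :
    P {ω | W.X (n + 1) ω ≠ 0}
      = ENNReal.ofReal ((1 - r) / n) * ∑ k ∈ Icc 1 n, P {ω | W.X k ω ≠ 0} := by
  have hevent : {ω | W.X (n + 1) ω ≠ 0} =ᵐ[P]
      ⋃ k ∈ Icc 1 n, W.A (n + 1) ⁻¹' moves d ∩ W.β n ⁻¹' {k} ∩ {ω | W.X k ω ≠ 0} := by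
    rw [eventuallyEq_set]
    filter_upwards [W.ae_A_mem_insert_zero_moves hn, W.ae_β_mem_Icc hn] with ω hA hβ
    simp only [Set.mem_iUnion, Set.mem_inter_iff, Set.mem_preimage, Finset.mem_coe,
      Set.mem_singleton_iff, Set.mem_ofPred_eq, W.X_succ_ne_zero_iff hn hA]
    exact ⟨fun h => ⟨_, hβ, ⟨h.1, rfl⟩, h.2⟩, fun ⟨k, _, ⟨hA, hk⟩, hX⟩ => ⟨hA, hk ▸ hX⟩⟩
  have hdisj : (Icc 1 n : Set ℕ).PairwiseDisjoint
      fun k => W.A (n + 1) ⁻¹' moves d ∩ W.β n ⁻¹' {k} ∩ {ω | W.X k ω ≠ 0} :=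
    fun k _ l _ hkl => Set.disjoint_left.2 fun ω hk hl => hkl (hk.1.2.symm.trans hl.1.2)
  have hβ : ∀ k ∈ Icc 1 n, P (W.β n ⁻¹' {k}) = ENNReal.ofReal (1 / n) := W.hβ n hn
  rw [measure_congr hevent, measure_biUnion_finset hdisj fun k _ =>
    ((W.measA _ (moves d).measurableSet).inter (W.measβ n (measurableSet_singleton k))).inter
      (W.measurableSet_X_ne_zero k), mul_sum]
  refine sum_congr rfl fun k hk => ?_
  rw [W.measure_inter_inter_X_ne_zero hn hk (moves d).measurableSet, W.measure_A_mem_moves hn,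
    hβ k hk, ← ENNReal.ofReal_mul (by linarith [W.hr.2]), mul_one_div]

theorem sum_measureReal_X_ne_zero {n : ℕ} (hn : 1 ≤ n) :
    ∑ k ∈ Icc 1 n, P.real {ω | W.X k ω ≠ 0} = aseq r n := by
  induction n, hn using Nat.le_induction with
  | base =>
    have h₁ : ∀ᵐ ω ∂P, ω ∈ {ω | W.X 1 ω ≠ 0} := by
      filter_upwards [W.ae_norm_X_one] with ω hω
      exact norm_ne_zero_iff.1 (by rw [hω]; exact one_ne_zero)
    simp [measureReal_def, (ae_iff_measure_eq (W.measurableSet_X_ne_zero 1).nullMeasurableSet).1 h₁]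
  | succ n hn ih =>
    have hrec : P.real {ω | W.X (n + 1) ω ≠ 0} = (1 - r) / n * aseq r n := by
      rw [measureReal_def, W.measure_X_succ_ne_zero hn, ENNReal.toReal_mul,
        ENNReal.toReal_ofReal (div_nonneg (by linarith [W.hr.2]) n.cast_nonneg),
        ENNReal.toReal_sum fun k _ => measure_ne_top P _, ← ih]
      rfl
    rw [sum_Icc_succ_top (by omega), ih, hrec, aseq_succ hn]
    ring

theorem integrable_Zstar (n : ℕ) : Integrable (W.Zstar n) P :=
  integrable_finsetSum _ fun _ hk => W.integrable_norm_sq_X (mem_Icc.1 hk).1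

theorem integral_Zstar {n : ℕ} (hn : 1 ≤ n) : ∫ ω, W.Zstar n ω ∂P = aseq r n := by
  rw [← W.sum_measureReal_X_ne_zero hn,
    ← sum_congr rfl fun k hk => W.integral_norm_sq_X (mem_Icc.1 hk).1,
    ← integral_finsetSum _ fun _ hk => W.integrable_norm_sq_X (mem_Icc.1 hk).1]
  rfl

theorem ae_forall_pos_eventually_Zstar_two_pow_lt (hr : 1 / 2 < r) :
    ∀ᵐ ω ∂P, ∀ ε > 0, ∀ᶠ j in atTop, W.Zstar (2 ^ j) ω < ε * ((2 ^ j : ℕ) : ℝ) ^ r :=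
  ae_forall_pos_eventually_lt_mul_of_summable_integral_div
    (fun _ => Eventually.of_forall (W.Zstar_nonneg _)) (fun _ => W.integrable_Zstar _)
    (fun _ => by positivity)
    (by simpa only [W.integral_Zstar Nat.one_le_two_pow]
      using summable_aseq_two_pow_div_rpow hr W.hr.2)

end MERWStops

/-- In the MERW with stops, if `1/2 < r ≤ 1`, then `Z_n*/n^r → 0` a.s. -/
theorem merwStops_lln_of_half_lt_r
    {Ω : Type*} [MeasurableSpace Ω] {P : Measure Ω} [IsProbabilityMeasure P]
    {d : ℕ} {p q r : ℝ} (W : MERWStops P d p q r) (hr : 1 / 2 < r) :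
    ∀ᵐ ω ∂P, Tendsto (fun n : ℕ => W.Zstar n ω / (n : ℝ) ^ r) atTop (nhds 0) := by
  filter_upwards [W.ae_forall_pos_eventually_Zstar_two_pow_lt hr] with ω hω
  exact tendsto_div_rpow_zero_of_monotone_of_two_pow (W.monotone_Zstar ω)
    (fun n => W.Zstar_nonneg n ω) W.hr.1 hω
end
end

section
/- Let 0 ≤ r ≤ 1 and for n ≥ 1 set u_{n−1} = Σ_{k=1}^n (Γ(2−r)·Γ(k)/Γ(k+1−r))². Then: (i) if 1/2 < r ≤ 1, lim_{n→∞} u_{n−1}/n^{2r−1} = (Γ(2−r))²/(2r−1); (ii) if r = 1/2, lim_{n→∞} u_{n−1}/log n = π/4; (iii) if 0 ≤ r < 1/2, u_{n−1} converges as n → ∞ to the finite value ₃F₂(1,1,1; 2−r,2−r; 1) = Σ_{j=0}^∞ (j!)²·(Γ(2−r))²/(Γ(j+2−r))². -/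
/-!
Euler's limit formula gives `n! / Γ(n + 1 + s) ~ n^(-s)`, so the increment `u_n - u_{n-1}` is
asymptotic to `Γ(2 - r)² n^(2r - 2)`. For `r < 1/2` this is summable, and the increments are the
terms of the ₃F₂ series. For `r ≥ 1/2` the Stolz–Cesàro theorem compares `u` with a sequence whose
increments have the same asymptotics: `Γ(2 - r)² n^(2r - 1) / (2r - 1)` if `r > 1/2`, and
`Γ(3/2)² log n = (π/4) log n` if `r = 1/2`.
-/

open Filter Real

noncomputable section

/-- The deterministic sequence `u_{n-1} = ∑_{k=1}^n (Γ(2-r) Γ(k) / Γ(k+1-r))²`. -/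
def useq (r : ℝ) (n : ℕ) : ℝ :=
  ∑ k ∈ Finset.Icc 1 n,
    (Real.Gamma (2 - r) * Real.Gamma (k : ℝ) / Real.Gamma ((k : ℝ) + 1 - r)) ^ 2

open Topology Asymptotics Finset
open scoped fwdDiff Nat

theorem Real.Gamma_mul_prod_range_add {s : ℝ} (hs : 0 < s) (n : ℕ) :
    Gamma s * ∏ j ∈ range (n + 1), (s + j) = Gamma (s + n + 1) := by
  induction n with
  | zero => simp [Gamma_add_one hs.ne', mul_comm]
  | succ n ih =>
    rw [prod_range_succ, ← mul_assoc, ih, Nat.cast_succ, ← add_assoc,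
      Gamma_add_one (s := s + n + 1) (by positivity), mul_comm]

theorem isEquivalent_factorial_div_Gamma_nat_add {s : ℝ} (hs : -1 < s) :
    (fun n : ℕ ↦ (n ! : ℝ) / Gamma (n + 1 + s)) ~[atTop] fun n ↦ (n : ℝ) ^ (-s) := by
  -- Euler's formula is used at `s + 1 > 0`, where `Γ` does not vanish
  have ht : 0 < s + 1 := by linarith
  have hseq := (GammaSeq_tendsto_Gamma (s + 1)).div_const (Gamma (s + 1))
  rw [div_self (Gamma_pos_of_pos ht).ne'] at hseq
  have hfrac : Tendsto (fun n : ℕ ↦ ((n : ℝ) + 1 + s) / n) atTop (𝓝 1) := by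
    simpa [add_assoc] using (tendsto_natCast_div_add_atTop (1 + s)).inv₀ one_ne_zero
  refine isEquivalent_of_tendsto_one ((mul_one (1 : ℝ) ▸ hseq.mul hfrac).congr' ?_)
  filter_upwards [eventually_gt_atTop 0] with n hn
  have hn' : (0 : ℝ) < n := by exact_mod_cast hn
  have hpos : 0 < (n : ℝ) + 1 + s := by linarith
  rw [GammaSeq, div_div, mul_comm _ (Gamma _), Gamma_mul_prod_range_add ht,
    show s + 1 + n + 1 = ((n : ℝ) + 1 + s) + 1 by ring, Gamma_add_one hpos.ne',
    rpow_add_one hn'.ne', Pi.div_apply, rpow_neg hn'.le]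
  have hΓ := (Gamma_pos_of_pos hpos).ne'
  field_simp

theorem sum_range_fwdDiff {G : Type*} [AddCommGroup G] (f : ℕ → G) (n : ℕ) :
    ∑ i ∈ range n, Δ_[1] f i = f n - f 0 :=
  sum_range_sub f n

theorem Asymptotics.IsEquivalent.of_fwdDiff {a b : ℕ → ℝ} (hb : Monotone b)
    (hb_top : Tendsto b atTop atTop) (h : Δ_[1] a ~[atTop] Δ_[1] b) : a ~[atTop] b := by
  have hconst (c : ℝ) : (fun _ ↦ c) =o[atTop] b :=
    isLittleO_const_left.2 <| Or.inr <| tendsto_norm_atTop_atTop.comp hb_top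
  -- summing `Δa - Δb = o(Δb)` gives `(a n - a 0) - (b n - b 0) = o(b n - b 0)`
  have hsum := h.isLittleO.sum_range (fun n ↦ sub_nonneg.2 (hb n.le_succ)) <| by
    simpa [sum_range_fwdDiff, sub_eq_add_neg] using tendsto_atTop_add_const_right _ (-b 0) hb_top
  simp only [Pi.sub_apply, sum_sub_distrib, sum_range_fwdDiff] at hsum
  refine IsLittleO.isEquivalent <|
    ((hsum.trans_isBigO ((isBigO_refl b _).sub (hconst _).isBigO)).add
      (hconst (a 0 - b 0))).congr_left fun n ↦ by simp only [Pi.sub_apply]; ring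

theorem tendsto_div_of_fwdDiff_isEquivalent {a b : ℕ → ℝ} {c : ℝ} (hc : 0 < c)
    (hb : Monotone b) (hb_top : Tendsto b atTop atTop)
    (h : Δ_[1] a ~[atTop] fun n ↦ c * Δ_[1] b n) :
    Tendsto (fun n ↦ a n / b n) atTop (𝓝 c) := by
  have hab : a ~[atTop] fun n ↦ c * b n :=
    IsEquivalent.of_fwdDiff (fun m n hmn ↦ by gcongr; exact hb hmn)
      (hb_top.const_mul_atTop hc) (h.congr_right (.of_forall fun n ↦ by simp [fwdDiff, mul_sub]))
  refine ((hab.div IsEquivalent.refl).tendsto_nhds_iff).2 (tendsto_const_nhds.congr' ?_)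
  filter_upwards [hb_top.eventually_gt_atTop 0] with n hn
  simp [hn.ne']

theorem tendsto_nat_mul_one_add_inv_rpow_sub_one (p : ℝ) :
    Tendsto (fun n : ℕ ↦ n * ((1 + (n : ℝ)⁻¹) ^ p - 1)) atTop (𝓝 p) := by
  have hderiv := hasDerivAt_iff_tendsto_slope_zero.1
    (hasDerivAt_rpow_const (x := 1) (p := p) (Or.inl one_ne_zero))
  have hinv : Tendsto (fun n : ℕ ↦ (n : ℝ)⁻¹) atTop (𝓝[≠] 0) :=
    (tendsto_inv_atTop_nhdsGT_zero.comp tendsto_natCast_atTop_atTop).mono_right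
      (nhdsWithin_mono _ fun x hx ↦ ne_of_gt hx)
  simpa [Function.comp_def] using hderiv.comp hinv

theorem isEquivalent_fwdDiff_rpow {p : ℝ} (hp : p ≠ 0) :
    Δ_[1] (fun n : ℕ ↦ (n : ℝ) ^ p) ~[atTop] fun n ↦ p * (n : ℝ) ^ (p - 1) := by
  have h := (tendsto_nat_mul_one_add_inv_rpow_sub_one p).div_const p
  rw [div_self hp] at h
  refine isEquivalent_of_tendsto_one (h.congr' ?_)
  filter_upwards [eventually_gt_atTop 0] with n hn
  have hn' : (0 : ℝ) < n := by exact_mod_cast hn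
  rw [Pi.div_apply, fwdDiff, Nat.cast_add, Nat.cast_one, rpow_sub_one hn'.ne',
    show (n : ℝ) + 1 = n * (1 + (n : ℝ)⁻¹) by field_simp, mul_rpow hn'.le (by positivity)]
  field_simp

theorem isEquivalent_fwdDiff_log :
    Δ_[1] (fun n : ℕ ↦ log n) ~[atTop] fun n ↦ (n : ℝ)⁻¹ := by
  refine isEquivalent_of_tendsto_one <|
    ((tendsto_mul_log_one_add_div_atTop 1).comp tendsto_natCast_atTop_atTop).congr' ?_
  filter_upwards [eventually_gt_atTop 0] with n hn
  have hn' : (0 : ℝ) < n := by exact_mod_cast hn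
  rw [Function.comp_apply, Pi.div_apply, fwdDiff, Nat.cast_add, Nat.cast_one,
    one_add_div hn'.ne', log_div (by positivity) hn'.ne', div_inv_eq_mul, mul_comm]

theorem fwdDiff_useq (r : ℝ) (n : ℕ) :
    Δ_[1] (useq r) n = (n ! : ℝ) ^ 2 * Gamma (2 - r) ^ 2 / Gamma (n + 2 - r) ^ 2 := by
  rw [fwdDiff, useq, useq, sum_Icc_succ_top (by omega), add_sub_cancel_left, Nat.cast_add,
    Nat.cast_one, Gamma_nat_eq_factorial, show (n : ℝ) + 1 + 1 - r = n + 2 - r by ring]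
  ring

theorem isEquivalent_fwdDiff_useq {r : ℝ} (hr : r < 2) :
    Δ_[1] (useq r) ~[atTop] fun n ↦ Gamma (2 - r) ^ 2 * (n : ℝ) ^ (2 * r - 2) := by
  have h := (IsEquivalent.refl (u := fun _ : ℕ ↦ Gamma (2 - r) ^ 2)).mul
    ((isEquivalent_factorial_div_Gamma_nat_add (s := 1 - r) (by linarith)).pow 2)
  refine (h.congr_left (.of_forall fun n ↦ ?_)).congr_right (.of_forall fun n ↦ ?_)
  · rw [fwdDiff_useq, Pi.mul_apply, Pi.pow_apply, show (n : ℝ) + 1 + (1 - r) = n + 2 - r by ring]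
    ring
  · rw [Pi.mul_apply, Pi.pow_apply, ← rpow_mul_natCast n.cast_nonneg]
    ring_nf

theorem tendsto_useq_div_rpow {r : ℝ} (hr : 1 / 2 < r) (hr2 : r < 2) :
    Tendsto (fun n ↦ useq r n / (n : ℝ) ^ (2 * r - 1)) atTop
      (𝓝 (Gamma (2 - r) ^ 2 / (2 * r - 1))) := by
  have hp : 0 < 2 * r - 1 := by linarith
  have hΓ := Gamma_pos_of_pos (show 0 < 2 - r by linarith)
  refine tendsto_div_of_fwdDiff_isEquivalent (by positivity)
    (fun m n hmn ↦ rpow_le_rpow m.cast_nonneg (Nat.cast_le.2 hmn) hp.le)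
    ((tendsto_rpow_atTop hp).comp tendsto_natCast_atTop_atTop)
    ((isEquivalent_fwdDiff_useq hr2).trans ?_)
  refine ((IsEquivalent.refl (u := fun _ : ℕ ↦ Gamma (2 - r) ^ 2 / (2 * r - 1))).mul
    (isEquivalent_fwdDiff_rpow hp.ne').symm).congr_left (.of_forall fun n ↦ ?_)
  rw [Pi.mul_apply, show 2 * r - 1 - 1 = 2 * r - 2 by ring]
  field_simp

theorem tendsto_useq_one_half_div_log :
    Tendsto (fun n ↦ useq (1 / 2) n / log n) atTop (𝓝 (π / 4)) := by
  have hΓ : Gamma (2 - 1 / 2) ^ 2 = π / 4 := by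
    have := Gamma_nat_add_one_add_half 0
    norm_num at this ⊢
    rw [this, div_pow, sq_sqrt pi_pos.le]
    norm_num
  refine tendsto_div_of_fwdDiff_isEquivalent (by positivity)
    (fun m n hmn ↦ ?_) (tendsto_log_atTop.comp tendsto_natCast_atTop_atTop)
    ((isEquivalent_fwdDiff_useq (by norm_num)).trans ?_)
  · rcases m.eq_zero_or_pos with rfl | hm
    · simpa using log_natCast_nonneg n
    · exact log_le_log (by exact_mod_cast hm) (by exact_mod_cast hmn)
  refine ((IsEquivalent.refl (u := fun _ : ℕ ↦ π / 4)).mul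
    isEquivalent_fwdDiff_log.symm).congr_left (.of_forall fun n ↦ ?_)
  rw [Pi.mul_apply, hΓ]
  norm_num [rpow_neg_one]

theorem tendsto_useq_of_lt_one_half {r : ℝ} (hr : r < 1 / 2) :
    Tendsto (useq r) atTop
      (𝓝 (∑' j : ℕ, (j ! : ℝ) ^ 2 * Gamma (2 - r) ^ 2 / Gamma (j + 2 - r) ^ 2)) := by
  have hsum : Summable (Δ_[1] (useq r)) :=
    (isEquivalent_fwdDiff_useq (by linarith)).summable_iff_nat.2
      ((summable_nat_rpow.2 (by linarith)).mul_left _)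
  simp only [← fwdDiff_useq]
  refine hsum.hasSum.tendsto_sum_nat.congr fun n ↦ ?_
  simp [sum_range_fwdDiff, useq]

theorem useq_asymptotics_general (r : ℝ) (hr1 : r ≤ 1) :
    (1 / 2 < r →
      Tendsto (fun n : ℕ => useq r n / (n : ℝ) ^ (2 * r - 1)) atTop
        (nhds (Real.Gamma (2 - r) ^ 2 / (2 * r - 1)))) ∧
    (r = 1 / 2 →
      Tendsto (fun n : ℕ => useq r n / Real.log n) atTop (nhds (Real.pi / 4))) ∧
    (r < 1 / 2 →
      Tendsto (fun n : ℕ => useq r n) atTop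
        (nhds (∑' j : ℕ,
          (Nat.factorial j : ℝ) ^ 2 * Real.Gamma (2 - r) ^ 2 /
            Real.Gamma ((j : ℝ) + 2 - r) ^ 2))) :=
  ⟨fun hr ↦ tendsto_useq_div_rpow hr (by linarith),
    fun hr ↦ hr ▸ tendsto_useq_one_half_div_log,
    tendsto_useq_of_lt_one_half⟩

/-- Asymptotics of `u_{n-1} = ∑_{k=1}^n (Γ(2-r)Γ(k)/Γ(k+1-r))²` for
`0 ≤ r ≤ 1`: (i) if `1/2 < r ≤ 1`, `u_{n-1}/n^{2r-1} → Γ(2-r)²/(2r-1)`;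
(ii) if `r = 1/2`, `u_{n-1}/log n → π/4`; (iii) if `0 ≤ r < 1/2`, `u_{n-1}` converges to
`₃F₂(1,1,1;2-r,2-r;1) = ∑_{j≥0} (j!)² Γ(2-r)² / Γ(j+2-r)²`. -/
theorem useq_asymptotics (r : ℝ) (hr0 : 0 ≤ r) (hr1 : r ≤ 1) :
    (1 / 2 < r →
      Tendsto (fun n : ℕ => useq r n / (n : ℝ) ^ (2 * r - 1)) atTop
        (nhds (Real.Gamma (2 - r) ^ 2 / (2 * r - 1)))) ∧
    (r = 1 / 2 →
      Tendsto (fun n : ℕ => useq r n / Real.log n) atTop (nhds (Real.pi / 4))) ∧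
    (r < 1 / 2 →
      Tendsto (fun n : ℕ => useq r n) atTop
        (nhds (∑' j : ℕ,
          (Nat.factorial j : ℝ) ^ 2 * Real.Gamma (2 - r) ^ 2 /
            Real.Gamma ((j : ℝ) + 2 - r) ^ 2))) :=
  useq_asymptotics_general r hr1

end
end

section
/- Let b = P(Y_k = 0) for k ≥ 2. Then the following quadratic strong law holds almost surely: lim_{n→∞} (1/log(n+1)) · Σ_{k=1}^n (Z_k* − (k−1)(1−b))² / (k(k+1)) = b(1−b). -/
open MeasureTheory ProbabilityTheory Filter

noncomputable section

/-- The random step sizes of the MERW with random step sizes: `(Y_n)_{n ≥ 2}` is an i.i.d.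
sequence of nonnegative real random variables with `P(Y_n = 0) = b`. -/
structure RandomStepSizes {Ω : Type*} [MeasurableSpace Ω] (P : Measure Ω) (b : ℝ) where
  Y : ℕ → Ω → ℝ
  hb : b ∈ Set.Icc (0 : ℝ) 1
  measY : ∀ n, Measurable (Y n)
  hnonneg : ∀ n, 2 ≤ n → ∀ ω, 0 ≤ Y n ω
  /-- `(Y_n)_{n ≥ 2}` are independent. -/
  hindep : iIndepFun (fun n : ℕ => Y (n + 2)) P
  /-- `(Y_n)_{n ≥ 2}` are identically distributed. -/
  hident : ∀ n, 2 ≤ n → IdentDistrib (Y n) (Y 2) P P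
  /-- `P(Y_n = 0) = b` for `n ≥ 2`. -/
  hzero : P {ω | Y 2 ω = 0} = ENNReal.ofReal b

namespace RandomStepSizes

variable {Ω : Type*} [MeasurableSpace Ω] {P : Measure Ω} {b : ℝ}

/-- The number of moves up to time `n`: `Z_n* = 1 + ∑_{k=2}^n 𝟙{Y_k ≠ 0}` (the first
step is always a move). -/
def Zstar (W : RandomStepSizes P b) (n : ℕ) (ω : Ω) : ℝ :=
  1 + ∑ k ∈ Finset.Icc 2 n, if W.Y k ω = 0 then (0 : ℝ) else 1

end RandomStepSizes

/-!
Put `X_i = b - 𝟙{Y_{i+2} = 0}`: independent, centred, bounded by `1`, of variance `σ² = b(1-b)`,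
and `Z*_{m+1} - m(1-b) = 1 + S_m` with `S_m = X_0 + ⋯ + X_{m-1}`. So it suffices to prove a
quadratic strong law for the walk `a + S_m` of such steps.

Write `(a + S_m)² = g_m + a² + mσ²`. The deterministic part contributes
`∑_{m<n} (a² + mσ²)/((m+1)(m+2)) = σ² log n + O(1)`. The compensated squares `g_m` have
orthogonal increments, `E[g_k g_l] = E[g_k²]` for `k ≤ l`, and `E[g_m²] = O(m²)` by the fourth
moment bound `E[S_m⁴] ≤ 3m²`; hence `D_n = ∑_{m<n} g_m/((m+1)(m+2))` has `E[D_n²] = O(log n)`.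
Along `n_i = 2^((i+1)²) - 1` we have `log (n_i + 1) = (i+1)² log 2`, so
`∑_i E[(D_{n_i}/log (n_i+1))²] < ∞` and `D_{n_i}/log (n_i+1) → 0` almost surely. Since the sum
of squares is monotone in `n` and `log (n_{i+1}+1)/log (n_i+1) → 1`, convergence along `n_i`
gives convergence along all `n`.
-/
-- Essentially bounded functions form an algebra, so registering `MemLp · ⊤` with `fun_prop`
-- makes integrability of polynomial expressions in bounded random variables automatic.
attribute [fun_prop] MemLp memLp_top_const

section EssentiallyBounded

variable {Ω : Type*} [MeasurableSpace Ω] {P : Measure Ω} {f g : Ω → ℝ}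

@[fun_prop]
lemma memLp_top_add (hf : MemLp f ⊤ P) (hg : MemLp g ⊤ P) :
    MemLp (fun ω => f ω + g ω) ⊤ P :=
  hf.add hg

@[fun_prop]
lemma memLp_top_sub (hf : MemLp f ⊤ P) (hg : MemLp g ⊤ P) :
    MemLp (fun ω => f ω - g ω) ⊤ P :=
  hf.sub hg

@[fun_prop]
lemma memLp_top_mul (hf : MemLp f ⊤ P) (hg : MemLp g ⊤ P) :
    MemLp (fun ω => f ω * g ω) ⊤ P :=
  hg.mul' hf (r := ⊤)

@[fun_prop]
lemma memLp_top_pow (hf : MemLp f ⊤ P) (n : ℕ) : MemLp (fun ω => f ω ^ n) ⊤ P := by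
  induction n with
  | zero => simpa using memLp_top_const (μ := P) (1 : ℝ)
  | succ n ih => simpa only [pow_succ] using memLp_top_mul ih hf

@[fun_prop]
lemma memLp_top_div_const (hf : MemLp f ⊤ P) (c : ℝ) : MemLp (fun ω => f ω / c) ⊤ P := by
  simpa only [div_eq_mul_inv] using memLp_top_mul hf (memLp_top_const c⁻¹)

@[fun_prop]
lemma memLp_top_finsetSum {ι : Type*} (s : Finset ι) {f : ι → Ω → ℝ}
    (hf : ∀ i, MemLp (f i) ⊤ P) : MemLp (fun ω => ∑ i ∈ s, f i ω) ⊤ P :=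
  memLp_finsetSum s fun i _ => hf i

end EssentiallyBounded

theorem tendsto_div_of_monotone_of_tendsto_comp {U L : ℕ → ℝ} {φ : ℕ → ℕ} {c : ℝ}
    (hU : Monotone U) (hU0 : ∀ n, 0 ≤ U n) (hL : Monotone L) (hφ : StrictMono φ)
    (hL0 : 0 < L (φ 0)) (hUφ : Tendsto (fun i => U (φ i) / L (φ i)) atTop (nhds c))
    (hLφ : Tendsto (fun i => L (φ (i + 1)) / L (φ i)) atTop (nhds 1)) :
    Tendsto (fun n => U n / L n) atTop (nhds c) := by
  -- `ψ n` is the last index with `φ (ψ n) ≤ n`, so `n` lies in `[φ (ψ n), φ (ψ n + 1))`.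
  let ψ : ℕ → ℕ := fun n => Nat.findGreatest (fun i => φ i ≤ n) n
  have hψ_le : ∀ n, φ 0 ≤ n → φ (ψ n) ≤ n := fun n hn =>
    Nat.findGreatest_spec (P := fun i => φ i ≤ n) (Nat.zero_le n) hn
  have lt_ψ_succ : ∀ n, n < φ (ψ n + 1) := by
    intro n
    by_contra! h
    exact Nat.findGreatest_is_greatest (Nat.lt_succ_self _) ((hφ.le_apply).trans h) h
  have hψ : Tendsto ψ atTop atTop :=
    tendsto_atTop_atTop.2 fun B => ⟨φ B, fun n hn => Nat.le_findGreatest (hφ.le_apply.trans hn) hn⟩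
  have hLφ_pos : ∀ i, 0 < L (φ i) := fun i => hL0.trans_le (hL (hφ.monotone (Nat.zero_le i)))
  have upper : Tendsto (fun i => U (φ (i + 1)) / L (φ (i + 1)) * (L (φ (i + 1)) / L (φ i)))
      atTop (nhds c) := by
    simpa using (hUφ.comp (tendsto_add_atTop_nat 1)).mul hLφ
  have lower : Tendsto (fun i => U (φ i) / L (φ i) * (L (φ (i + 1)) / L (φ i))⁻¹)
      atTop (nhds c) := by
    simpa using hUφ.mul (hLφ.inv₀ one_ne_zero)
  refine tendsto_of_tendsto_of_tendsto_of_le_of_le' (lower.comp hψ) (upper.comp hψ) ?_ ?_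
  all_goals
    filter_upwards [eventually_ge_atTop (φ 0)] with n hn
    have h₁ := hLφ_pos (ψ n)
    have h₂ := hLφ_pos (ψ n + 1)
    have h₃ := h₁.trans_le (hL (hψ_le n hn))
    simp only [Function.comp_apply, inv_div]
  · rw [div_mul_div_cancel₀ h₁.ne']
    exact div_le_div₀ (hU0 n) (hU (hψ_le n hn)) h₃ (hL (lt_ψ_succ n).le)
  · rw [div_mul_div_cancel₀ h₂.ne']
    exact div_le_div₀ (hU0 _) (hU (lt_ψ_succ n).le) h₁ (hL (hψ_le n hn))

lemma sum_range_add_mul_div (c s : ℝ) (n : ℕ) :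
    ∑ m ∈ Finset.range n, (c + m * s) / ((m + 1) * (m + 2))
      = s * (harmonic (n + 1) - 1) + (c - s) * (1 - 1 / (n + 1)) := by
  induction n with
  | zero => simp
  | succ n ih =>
    rw [Finset.sum_range_succ, ih, harmonic_succ (n + 1)]
    push_cast
    field_simp
    ring

lemma tendsto_sum_range_add_mul_div_log (c s : ℝ) :
    Tendsto (fun n : ℕ => (∑ m ∈ Finset.range n, (c + m * s) / ((m + 1) * (m + 2)))
      / Real.log (n + 1)) atTop (nhds s) := by
  have hlog : Tendsto (fun n : ℕ => Real.log (n + 1)) atTop atTop :=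
    Real.tendsto_log_atTop.comp (tendsto_atTop_add_const_right _ 1 tendsto_natCast_atTop_atTop)
  have hγ : Tendsto (fun n : ℕ => (harmonic (n + 1) : ℝ) - Real.log (n + 1)) atTop
      (nhds Real.eulerMascheroniConstant) := by
    refine (Real.tendsto_harmonic_sub_log.comp (tendsto_add_atTop_nat 1)).congr fun n => ?_
    simp only [Function.comp_apply, Nat.cast_add, Nat.cast_one]
  have hrest : Tendsto (fun n : ℕ => s * ((harmonic (n + 1) : ℝ) - Real.log (n + 1) - 1)
      + (c - s) * (1 - 1 / (n + 1))) atTop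
      (nhds (s * (Real.eulerMascheroniConstant - 1) + (c - s) * (1 - 0))) :=
    ((hγ.sub_const 1).const_mul s).add
      ((tendsto_one_div_add_atTop_nhds_zero_nat.const_sub 1).const_mul (c - s))
  have key := (hrest.div_atTop hlog).const_add s
  rw [add_zero] at key
  refine key.congr' ?_
  filter_upwards [eventually_gt_atTop 0] with n hn
  have : 0 < Real.log (n + 1) := Real.log_pos (by simp; omega)
  rw [sum_range_add_mul_div]
  field_simp
  ring

def twoPowSqSubOne (i : ℕ) : ℕ := 2 ^ (i + 1) ^ 2 - 1

lemma strictMono_twoPowSqSubOne : StrictMono twoPowSqSubOne := fun i j hij => by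
  have : 2 ^ (i + 1) ^ 2 < 2 ^ (j + 1) ^ 2 :=
    Nat.pow_lt_pow_right one_lt_two (Nat.pow_lt_pow_left (by omega) two_ne_zero)
  unfold twoPowSqSubOne
  have := Nat.one_le_two_pow (n := (i + 1) ^ 2)
  omega

lemma log_twoPowSqSubOne_add_one (i : ℕ) :
    Real.log (twoPowSqSubOne i + 1) = (i + 1) ^ 2 * Real.log 2 := by
  rw [twoPowSqSubOne, Nat.cast_sub Nat.one_le_two_pow, Nat.cast_one, sub_add_cancel,
    Nat.cast_pow, Real.log_pow]
  push_cast
  ring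

lemma tendsto_log_twoPowSqSubOne_ratio :
    Tendsto (fun i => Real.log (twoPowSqSubOne (i + 1) + 1) / Real.log (twoPowSqSubOne i + 1))
      atTop (nhds 1) := by
  have h := ((tendsto_one_div_add_atTop_nhds_zero_nat.const_add (1 : ℝ)).pow 2)
  rw [add_zero, one_pow] at h
  refine h.congr fun i => ?_
  have : 0 < Real.log 2 := Real.log_pos one_lt_two
  simp only [log_twoPowSqSubOne_add_one]
  push_cast
  field_simp

lemma summable_inv_log_twoPowSqSubOne :
    Summable fun i => 1 / Real.log (twoPowSqSubOne i + 1) := by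
  simp only [log_twoPowSqSubOne_add_one, one_div, mul_inv]
  refine Summable.mul_right _ ?_
  simpa using (summable_nat_add_iff 1).2 (Real.summable_nat_pow_inv.2 one_lt_two)

lemma ae_tendsto_zero_of_summable_integral_sq {Ω : Type*} [MeasurableSpace Ω] {P : Measure Ω}
    {Z : ℕ → Ω → ℝ} (hZ : ∀ i, Integrable (fun ω => Z i ω ^ 2) P)
    (hsum : Summable fun i => ∫ ω, Z i ω ^ 2 ∂P) :
    ∀ᵐ ω ∂P, Tendsto (fun i => Z i ω) atTop (nhds 0) := by
  have hmeas : ∀ i, AEMeasurable (fun ω => ENNReal.ofReal (Z i ω ^ 2)) P :=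
    fun i => (hZ i).1.aemeasurable.ennreal_ofReal
  have hlint : ∫⁻ ω, ∑' i, ENNReal.ofReal (Z i ω ^ 2) ∂P ≠ ⊤ := by
    rw [lintegral_tsum hmeas]
    simp_rw [← ofReal_integral_eq_lintegral_ofReal (hZ _) (ae_of_all _ fun _ => sq_nonneg _)]
    rw [← ENNReal.ofReal_tsum_of_nonneg (fun i => integral_nonneg fun _ => sq_nonneg _) hsum]
    exact ENNReal.ofReal_ne_top
  filter_upwards [ae_lt_top' (AEMeasurable.tsum hmeas) hlint] with ω hω
  have hsq := ENNReal.summable_toReal hω.ne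
  simp only [ENNReal.toReal_ofReal (sq_nonneg _)] at hsq
  rw [tendsto_zero_iff_abs_tendsto_zero]
  simpa only [Function.comp_def, Real.sqrt_sq_eq_abs, Real.sqrt_zero] using
    hsq.tendsto_atTop_zero.sqrt

section TwoIndependent

variable {Ω : Type*} [MeasurableSpace Ω] {P : Measure Ω} {A B : Ω → ℝ}

lemma ProbabilityTheory.IndepFun.integral_pow_mul_pow (hAB : IndepFun A B P)
    (hA : AEStronglyMeasurable A P) (hB : AEStronglyMeasurable B P) (p q : ℕ) :
    ∫ ω, A ω ^ p * B ω ^ q ∂P = (∫ ω, A ω ^ p ∂P) * ∫ ω, B ω ^ q ∂P :=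
  (hAB.comp (measurable_id.pow_const p) (measurable_id.pow_const q)
    ).integral_fun_mul_eq_mul_integral (hA.pow p) (hB.pow q)

variable [IsProbabilityMeasure P]

lemma integral_add_sq_of_indepFun (hAB : IndepFun A B P) (hA : MemLp A ⊤ P) (hB : MemLp B ⊤ P)
    (hA0 : ∫ ω, A ω ∂P = 0) :
    ∫ ω, (A ω + B ω) ^ 2 ∂P = ∫ ω, A ω ^ 2 ∂P + ∫ ω, B ω ^ 2 ∂P := by
  have h11 := hAB.integral_pow_mul_pow hA.1 hB.1 1 1
  simp only [pow_one, hA0, zero_mul] at h11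
  simp_rw [add_sq]
  simp (disch := exact MemLp.integrable le_top (by fun_prop)) only [integral_add,
    integral_const_mul, mul_assoc, h11]
  ring

lemma integral_add_pow_four_of_indepFun (hAB : IndepFun A B P) (hA : MemLp A ⊤ P)
    (hB : MemLp B ⊤ P) (hA0 : ∫ ω, A ω ∂P = 0) (hB0 : ∫ ω, B ω ∂P = 0) :
    ∫ ω, (A ω + B ω) ^ 4 ∂P
      = ∫ ω, A ω ^ 4 ∂P + 6 * (∫ ω, A ω ^ 2 ∂P) * (∫ ω, B ω ^ 2 ∂P) + ∫ ω, B ω ^ 4 ∂P := by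
  have h31 := hAB.integral_pow_mul_pow hA.1 hB.1 3 1
  have h22 := hAB.integral_pow_mul_pow hA.1 hB.1 2 2
  have h13 := hAB.integral_pow_mul_pow hA.1 hB.1 1 3
  simp only [pow_one, hA0, hB0, mul_zero, zero_mul] at h31 h13
  have hexp : ∀ ω, (A ω + B ω) ^ 4 = A ω ^ 4 + 4 * (A ω ^ 3 * B ω)
      + 6 * (A ω ^ 2 * B ω ^ 2) + 4 * (A ω * B ω ^ 3) + B ω ^ 4 := fun ω => by ring
  simp (disch := exact MemLp.integrable le_top (by fun_prop)) only [hexp, integral_add,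
    integral_const_mul, h31, h22, h13]
  ring

end TwoIndependent

structure IsBoundedCenteredIndep {Ω : Type*} [MeasurableSpace Ω] (X : ℕ → Ω → ℝ) (σ2 : ℝ)
    (P : Measure Ω) : Prop where
  indep : iIndepFun X P
  measurable : ∀ i, Measurable (X i)
  abs_le_one : ∀ i ω, |X i ω| ≤ 1
  integral_eq_zero : ∀ i, ∫ ω, X i ω ∂P = 0
  integral_sq : ∀ i, ∫ ω, X i ω ^ 2 ∂P = σ2

def compensatedSq {Ω : Type*} (X : ℕ → Ω → ℝ) (a σ2 : ℝ) (m : ℕ) (ω : Ω) : ℝ :=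
  (a + ∑ i ∈ Finset.range m, X i ω) ^ 2 - (a ^ 2 + m * σ2)

def compensatedSqSum {Ω : Type*} (X : ℕ → Ω → ℝ) (a σ2 : ℝ) (n : ℕ) (ω : Ω) : ℝ :=
  ∑ m ∈ Finset.range n, compensatedSq X a σ2 m ω / ((m + 1) * (m + 2))

namespace IsBoundedCenteredIndep

variable {Ω : Type*} [MeasurableSpace Ω] {P : Measure Ω} {X : ℕ → Ω → ℝ} {σ2 : ℝ}

lemma memLp_top (hX : IsBoundedCenteredIndep X σ2 P) (i : ℕ) : MemLp (X i) ⊤ P :=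
  memLp_top_of_bound (hX.measurable i).aestronglyMeasurable 1
    (ae_of_all _ fun ω => (Real.norm_eq_abs _).trans_le (hX.abs_le_one i ω))

lemma memLp_top_compensatedSq (hX : IsBoundedCenteredIndep X σ2 P) (a : ℝ) (m : ℕ) :
    MemLp (compensatedSq X a σ2 m) ⊤ P := by
  have := hX.memLp_top
  unfold compensatedSq
  fun_prop

lemma memLp_top_compensatedSqSum (hX : IsBoundedCenteredIndep X σ2 P) (a : ℝ) (n : ℕ) :
    MemLp (compensatedSqSum X a σ2 n) ⊤ P := by
  have := hX.memLp_top_compensatedSq a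
  unfold compensatedSqSum
  fun_prop

lemma indepFun_finsetSum_of_disjoint (hX : IsBoundedCenteredIndep X σ2 P) {s t : Finset ℕ}
    (hst : Disjoint s t) :
    IndepFun (fun ω => ∑ i ∈ s, X i ω) (fun ω => ∑ i ∈ t, X i ω) P := by
  have hsum : ∀ u : Finset ℕ, Measurable fun x : u → ℝ => ∑ i, x i :=
    fun u => Finset.measurable_sum _ fun i _ => measurable_pi_apply i
  have h := (hX.indep.indepFun_finset s t hst hX.measurable).comp (hsum s) (hsum t)
  convert h using 1 <;> ext ω <;> exact (Finset.sum_coe_sort _ fun i => X i ω).symm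

lemma indepFun_finsetSum_of_notMem (hX : IsBoundedCenteredIndep X σ2 P) {t : Finset ℕ} {i : ℕ}
    (hi : i ∉ t) : IndepFun (X i) (fun ω => ∑ j ∈ t, X j ω) P := by
  simpa using hX.indepFun_finsetSum_of_disjoint (Finset.disjoint_singleton_left.2 hi)

lemma sq_le_one (hX : IsBoundedCenteredIndep X σ2 P) (i : ℕ) (ω : Ω) : X i ω ^ 2 ≤ 1 := by
  have := abs_le.1 (hX.abs_le_one i ω)
  nlinarith

lemma sigma2_nonneg (hX : IsBoundedCenteredIndep X σ2 P) : 0 ≤ σ2 :=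
  hX.integral_sq 0 ▸ integral_nonneg fun _ => sq_nonneg _

variable [IsProbabilityMeasure P]

lemma sigma2_le_one (hX : IsBoundedCenteredIndep X σ2 P) : σ2 ≤ 1 := by
  rw [← hX.integral_sq 0]
  exact (integral_mono_of_nonneg (ae_of_all _ fun _ => sq_nonneg _) (integrable_const 1)
    (ae_of_all _ (hX.sq_le_one 0))).trans (by simp)

lemma integral_finsetSum_eq_zero (hX : IsBoundedCenteredIndep X σ2 P) (t : Finset ℕ) :
    ∫ ω, ∑ i ∈ t, X i ω ∂P = 0 := by
  rw [integral_finsetSum _ fun i _ => (hX.memLp_top i).integrable le_top]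
  simp [hX.integral_eq_zero]

lemma integral_finsetSum_sq (hX : IsBoundedCenteredIndep X σ2 P) (t : Finset ℕ) :
    ∫ ω, (∑ i ∈ t, X i ω) ^ 2 ∂P = t.card * σ2 := by
  induction t using Finset.induction_on with
  | empty => simp
  | insert i t hi ih =>
    have := hX.memLp_top
    simp_rw [Finset.sum_insert hi]
    rw [integral_add_sq_of_indepFun (hX.indepFun_finsetSum_of_notMem hi) (hX.memLp_top i)
      (by fun_prop) (hX.integral_eq_zero i), hX.integral_sq, ih, Finset.card_insert_of_notMem hi]
    push_cast
    ring

lemma integral_finsetSum_pow_four_le (hX : IsBoundedCenteredIndep X σ2 P) (t : Finset ℕ) :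
    ∫ ω, (∑ i ∈ t, X i ω) ^ 4 ∂P ≤ 3 * t.card ^ 2 := by
  induction t using Finset.induction_on with
  | empty => simp
  | insert i t hi ih =>
    have := hX.memLp_top
    have h4 : ∫ ω, X i ω ^ 4 ∂P ≤ 1 := by
      refine (integral_mono_of_nonneg (ae_of_all _ fun ω => by positivity) (integrable_const 1)
        (ae_of_all _ fun ω => ?_)).trans (by simp)
      nlinarith [hX.sq_le_one i ω, sq_nonneg (X i ω)]
    simp_rw [Finset.sum_insert hi]
    rw [integral_add_pow_four_of_indepFun (hX.indepFun_finsetSum_of_notMem hi) (hX.memLp_top i)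
      (by fun_prop) (hX.integral_eq_zero i) (hX.integral_finsetSum_eq_zero t), hX.integral_sq,
      hX.integral_finsetSum_sq, Finset.card_insert_of_notMem hi]
    have hc : (0 : ℝ) ≤ t.card := t.card.cast_nonneg
    have hσ := hX.sigma2_le_one
    push_cast
    nlinarith [mul_nonneg (mul_nonneg hc hX.sigma2_nonneg) (sub_nonneg.2 hσ),
      mul_nonneg hc (sub_nonneg.2 hσ)]

lemma integral_compensatedSq (hX : IsBoundedCenteredIndep X σ2 P) (a : ℝ) (m : ℕ) :
    ∫ ω, compensatedSq X a σ2 m ω ∂P = 0 := by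
  have := hX.memLp_top
  have hexp : ∀ ω, compensatedSq X a σ2 m ω
      = (∑ i ∈ Finset.range m, X i ω) ^ 2 + 2 * a * ∑ i ∈ Finset.range m, X i ω - m * σ2 :=
    fun ω => by unfold compensatedSq; ring
  simp (disch := exact MemLp.integrable le_top (by fun_prop)) only [hexp, integral_add,
    integral_sub, integral_const_mul, hX.integral_finsetSum_sq, hX.integral_finsetSum_eq_zero,
    integral_const, Finset.card_range]
  simp

lemma integral_compensatedSq_sq_le (hX : IsBoundedCenteredIndep X σ2 P) (a : ℝ) (m : ℕ) :
    ∫ ω, compensatedSq X a σ2 m ω ^ 2 ∂P ≤ 12 * (1 + a ^ 2) * (m + 1) ^ 2 := by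
  have := hX.memLp_top
  have := hX.memLp_top_compensatedSq a m
  set S := fun ω => ∑ i ∈ Finset.range m, X i ω
  have hle : ∀ ω, compensatedSq X a σ2 m ω ^ 2
      ≤ 3 * (S ω ^ 4 + 4 * a ^ 2 * S ω ^ 2 + m ^ 2 * σ2 ^ 2) := fun ω => by
    unfold compensatedSq
    nlinarith [sq_nonneg (S ω ^ 2 - 2 * a * S ω), sq_nonneg (S ω ^ 2 + m * σ2),
      sq_nonneg (2 * a * S ω + m * σ2)]
  refine (integral_mono (MemLp.integrable le_top (by fun_prop))
    (MemLp.integrable le_top (by fun_prop)) hle).trans ?_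
  simp (disch := exact MemLp.integrable le_top (by fun_prop)) only [integral_add,
    integral_const_mul, S, hX.integral_finsetSum_sq, integral_const, Finset.card_range,
    probReal_univ, smul_eq_mul, one_mul]
  have h4 := hX.integral_finsetSum_pow_four_le (Finset.range m)
  rw [Finset.card_range] at h4
  have hσ := hX.sigma2_le_one
  have hm : (0 : ℝ) ≤ m := m.cast_nonneg
  nlinarith [mul_nonneg (mul_nonneg hm hX.sigma2_nonneg) (sub_nonneg.2 hσ),
    mul_nonneg hm (sub_nonneg.2 hσ), mul_nonneg (sq_nonneg a) (mul_nonneg hm (sub_nonneg.2 hσ)),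
    mul_nonneg (sq_nonneg a) hm]

lemma integral_compensatedSq_mul (hX : IsBoundedCenteredIndep X σ2 P) (a : ℝ) {k l : ℕ}
    (hkl : k ≤ l) :
    ∫ ω, compensatedSq X a σ2 k ω * compensatedSq X a σ2 l ω ∂P
      = ∫ ω, compensatedSq X a σ2 k ω ^ 2 ∂P := by
  have := hX.memLp_top
  have := hX.memLp_top_compensatedSq a k
  set S := fun ω => ∑ i ∈ Finset.range k, X i ω
  set R := fun ω => ∑ i ∈ Finset.Ico k l, X i ω
  have hSR : IndepFun S R P := hX.indepFun_finsetSum_of_disjoint (by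
    rw [Finset.range_eq_Ico]; exact Finset.Ico_disjoint_Ico_consecutive 0 k l)
  have hS : Measurable S := by have := hX.measurable; fun_prop
  have hR : Measurable R := by have := hX.measurable; fun_prop
  have hexp : ∀ ω, compensatedSq X a σ2 k ω * compensatedSq X a σ2 l ω
      = compensatedSq X a σ2 k ω ^ 2 + 2 * (compensatedSq X a σ2 k ω * (a + S ω) * R ω)
        + compensatedSq X a σ2 k ω * R ω ^ 2 - (l - k) * σ2 * compensatedSq X a σ2 k ω := by
    intro ω
    simp only [compensatedSq, S, R, ← Finset.sum_range_add_sum_Ico _ hkl]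
    ring
  have h₁ : ∫ ω, compensatedSq X a σ2 k ω * (a + S ω) * R ω ∂P = 0 :=
    (hSR.integral_fun_comp_mul_comp (f := fun x => ((a + x) ^ 2 - (a ^ 2 + k * σ2)) * (a + x))
      (g := id) hS.aemeasurable hR.aemeasurable (by fun_prop) (by fun_prop)).trans
      (mul_eq_zero_of_right _ (hX.integral_finsetSum_eq_zero _))
  have h₂ : ∫ ω, compensatedSq X a σ2 k ω * R ω ^ 2 ∂P = 0 :=
    (hSR.integral_fun_comp_mul_comp (f := fun x => (a + x) ^ 2 - (a ^ 2 + k * σ2))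
      (g := (· ^ 2)) hS.aemeasurable hR.aemeasurable (by fun_prop) (by fun_prop)).trans
      (mul_eq_zero_of_left (hX.integral_compensatedSq a k) _)
  simp (disch := exact MemLp.integrable le_top (by fun_prop)) only [hexp, integral_add,
    integral_sub, integral_const_mul, h₁, h₂, hX.integral_compensatedSq]
  ring

lemma integral_compensatedSqSum_mul_le (hX : IsBoundedCenteredIndep X σ2 P) (a : ℝ) (n : ℕ) :
    ∫ ω, compensatedSqSum X a σ2 n ω * compensatedSq X a σ2 n ω ∂P ≤ 12 * (1 + a ^ 2) * n := by
  have := hX.memLp_top_compensatedSq a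
  simp only [compensatedSqSum, Finset.sum_mul, div_mul_eq_mul_div]
  rw [integral_finsetSum _ fun m _ => MemLp.integrable le_top (by fun_prop)]
  refine (Finset.sum_le_sum fun m hm => (?_ : _ ≤ 12 * (1 + a ^ 2))).trans_eq (by simp [mul_comm])
  rw [integral_div, hX.integral_compensatedSq_mul a (Finset.mem_range.1 hm).le,
    div_le_iff₀ (by positivity)]
  nlinarith [hX.integral_compensatedSq_sq_le a m, sq_nonneg a]

lemma integral_compensatedSqSum_sq_le (hX : IsBoundedCenteredIndep X σ2 P) (a : ℝ) (n : ℕ) :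
    ∫ ω, compensatedSqSum X a σ2 n ω ^ 2 ∂P ≤ 36 * (1 + a ^ 2) * harmonic n := by
  induction n with
  | zero => simp [compensatedSqSum]
  | succ n ih =>
    have := hX.memLp_top_compensatedSq a
    have := hX.memLp_top_compensatedSqSum a
    have hexp : ∀ ω, compensatedSqSum X a σ2 (n + 1) ω ^ 2 = compensatedSqSum X a σ2 n ω ^ 2
        + 2 / ((n + 1) * (n + 2)) * (compensatedSqSum X a σ2 n ω * compensatedSq X a σ2 n ω)
        + 1 / ((n + 1) * (n + 2)) ^ 2 * compensatedSq X a σ2 n ω ^ 2 := fun ω => by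
      rw [compensatedSqSum, Finset.sum_range_succ, ← compensatedSqSum]
      field_simp
      ring
    simp (disch := exact MemLp.integrable le_top (by fun_prop)) only [hexp, integral_add,
      integral_const_mul]
    have h₁ := hX.integral_compensatedSqSum_mul_le a n
    have h₂ := hX.integral_compensatedSq_sq_le a n
    have : 2 / ((n + 1) * (n + 2)) * (12 * (1 + a ^ 2) * n)
        + 1 / ((n + 1) * (n + 2)) ^ 2 * (12 * (1 + a ^ 2) * (n + 1) ^ 2)
        ≤ 36 * (1 + a ^ 2) * ((n : ℝ) + 1)⁻¹ := by
      field_simp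
      nlinarith [n.cast_nonneg (α := ℝ)]
    rw [harmonic_succ]
    push_cast
    nlinarith [mul_le_mul_of_nonneg_left h₁ (by positivity : (0 : ℝ) ≤ 2 / ((n + 1) * (n + 2))),
      mul_le_mul_of_nonneg_left h₂ (by positivity : (0 : ℝ) ≤ 1 / ((n + 1) * (n + 2)) ^ 2)]

lemma ae_tendsto_compensatedSqSum_div_log (hX : IsBoundedCenteredIndep X σ2 P) (a : ℝ) :
    ∀ᵐ ω ∂P, Tendsto (fun i => compensatedSqSum X a σ2 (twoPowSqSubOne i) ω
      / Real.log (twoPowSqSubOne i + 1)) atTop (nhds 0) := by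
  have := hX.memLp_top_compensatedSqSum a
  refine ae_tendsto_zero_of_summable_integral_sq (fun i => MemLp.integrable le_top (by fun_prop))
    ((summable_inv_log_twoPowSqSubOne.mul_left (108 * (1 + a ^ 2))).of_nonneg_of_le
      (fun i => integral_nonneg fun ω => sq_nonneg _) fun i => ?_)
  set L := Real.log (twoPowSqSubOne i + 1)
  have hL : Real.log 2 ≤ L := by
    simp only [L, log_twoPowSqSubOne_add_one]
    exact le_mul_of_one_le_left (Real.log_nonneg one_le_two) (by nlinarith [i.cast_nonneg (α := ℝ)])
  have hL0 : 0 < L := (Real.log_pos one_lt_two).trans_le hL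
  have hH : (harmonic (twoPowSqSubOne i) : ℝ) ≤ 3 * L := by
    have hlog : Real.log (twoPowSqSubOne i) ≤ L := by
      rcases (twoPowSqSubOne i).eq_zero_or_pos with h | h
      · simp [L, h]
      · exact Real.log_le_log (by positivity) (by linarith)
    linarith [harmonic_le_one_add_log (twoPowSqSubOne i), Real.log_two_gt_d9]
  have hD := hX.integral_compensatedSqSum_sq_le a (twoPowSqSubOne i)
  simp_rw [div_pow]
  rw [integral_div, div_le_iff₀ (by positivity)]
  calc _ ≤ 36 * (1 + a ^ 2) * (3 * L) := hD.trans (by gcongr)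
    _ = _ := by field_simp; ring

theorem ae_tendsto_sum_sq_div_log (hX : IsBoundedCenteredIndep X σ2 P) (a : ℝ) :
    ∀ᵐ ω ∂P, Tendsto (fun n : ℕ => (∑ m ∈ Finset.range n,
      (a + ∑ i ∈ Finset.range m, X i ω) ^ 2 / ((m + 1) * (m + 2))) / Real.log (n + 1))
      atTop (nhds σ2) := by
  filter_upwards [hX.ae_tendsto_compensatedSqSum_div_log a] with ω hω
  have hsplit : ∀ n, ∑ m ∈ Finset.range n, (a + ∑ i ∈ Finset.range m, X i ω) ^ 2
      / ((m + 1) * (m + 2)) = compensatedSqSum X a σ2 n ω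
        + ∑ m ∈ Finset.range n, (a ^ 2 + m * σ2) / ((m + 1) * (m + 2)) := by
    intro n
    rw [compensatedSqSum, ← Finset.sum_add_distrib]
    refine Finset.sum_congr rfl fun m _ => ?_
    rw [compensatedSq, ← add_div, sub_add_cancel]
  refine tendsto_div_of_monotone_of_tendsto_comp ?_
    (fun n => Finset.sum_nonneg fun m _ => by positivity)
    (fun m n hmn => Real.log_le_log (by positivity) (by gcongr)) strictMono_twoPowSqSubOne
    (by simp [log_twoPowSqSubOne_add_one, Real.log_pos one_lt_two]) ?_
    tendsto_log_twoPowSqSubOne_ratio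
  · exact monotone_nat_of_le_succ fun n => by
      rw [Finset.sum_range_succ]
      exact le_add_of_nonneg_right (by positivity)
  · have := hω.add ((tendsto_sum_range_add_mul_div_log (a ^ 2) σ2).comp
      strictMono_twoPowSqSubOne.tendsto_atTop)
    rw [zero_add] at this
    refine this.congr fun i => ?_
    simp only [Function.comp_apply, hsplit, add_div]

end IsBoundedCenteredIndep

section CenteredIndicator

variable {Ω : Type*} [MeasurableSpace Ω] {P : Measure Ω} [IsProbabilityMeasure P] {A : Set Ω}
  {b : ℝ}

lemma integrable_indicator_one (hA : MeasurableSet A) : Integrable (A.indicator (1 : Ω → ℝ)) P :=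
  (integrable_const 1).indicator hA

lemma integral_sub_indicator_one (hA : MeasurableSet A) (hAb : P.real A = b) :
    ∫ ω, (b - A.indicator 1 ω) ∂P = 0 := by
  rw [integral_sub (integrable_const b) (integrable_indicator_one hA), integral_const,
    integral_indicator_one hA, hAb]
  simp

lemma integral_sub_indicator_one_sq (hA : MeasurableSet A) (hAb : P.real A = b) :
    ∫ ω, (b - A.indicator 1 ω) ^ 2 ∂P = b * (1 - b) := by
  have hexp : ∀ ω, (b - A.indicator 1 ω) ^ 2 = b ^ 2 + (1 - 2 * b) * A.indicator 1 ω := by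
    intro ω
    by_cases h : ω ∈ A
    · simp [h]; ring
    · simp [h]
  simp_rw [hexp]
  rw [integral_add (integrable_const _) ((integrable_indicator_one hA).const_mul _),
    integral_const, integral_const_mul, integral_indicator_one hA, hAb]
  simp
  ring

end CenteredIndicator

namespace RandomStepSizes

variable {Ω : Type*} [MeasurableSpace Ω] {P : Measure Ω} {b : ℝ}

def centeredMove (W : RandomStepSizes P b) (i : ℕ) (ω : Ω) : ℝ :=
  b - {ω | W.Y (i + 2) ω = 0}.indicator 1 ω

lemma centeredMove_eq_comp (W : RandomStepSizes P b) (i : ℕ) :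
    W.centeredMove i = (fun y => b - ({0} : Set ℝ).indicator 1 y) ∘ W.Y (i + 2) := by
  ext ω
  simp [centeredMove, Set.indicator_apply]

lemma measurableSet_Y_eq_zero (W : RandomStepSizes P b) (n : ℕ) : MeasurableSet {ω | W.Y n ω = 0} :=
  W.measY n (measurableSet_singleton 0)

lemma measureReal_Y_eq_zero [IsProbabilityMeasure P] (W : RandomStepSizes P b) (i : ℕ) :
    P.real {ω | W.Y (i + 2) ω = 0} = b := by
  change (P (W.Y (i + 2) ⁻¹' {0})).toReal = b
  rw [(W.hident (i + 2) (by omega)).measure_mem_eq (measurableSet_singleton 0)]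
  exact (congrArg ENNReal.toReal W.hzero).trans (ENNReal.toReal_ofReal W.hb.1)

lemma isBoundedCenteredIndep_centeredMove [IsProbabilityMeasure P] (W : RandomStepSizes P b) :
    IsBoundedCenteredIndep W.centeredMove (b * (1 - b)) P := by
  have hf : Measurable fun y : ℝ => b - ({0} : Set ℝ).indicator 1 y :=
    measurable_const.sub (measurable_const.indicator (measurableSet_singleton 0))
  refine ⟨?_, fun i => ?_, fun i ω => ?_, fun i => ?_, fun i => ?_⟩
  · rw [show W.centeredMove = _ from funext W.centeredMove_eq_comp]
    exact W.hindep.comp _ fun _ => hf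
  · rw [centeredMove_eq_comp]
    exact hf.comp (W.measY _)
  · exact abs_sub_le_of_nonneg_of_le W.hb.1 W.hb.2 (Set.indicator_nonneg (fun _ _ => zero_le_one) _)
      (Set.indicator_apply_le' (fun _ => le_rfl) fun _ => zero_le_one)
  · exact integral_sub_indicator_one (W.measurableSet_Y_eq_zero _) (W.measureReal_Y_eq_zero i)
  · exact integral_sub_indicator_one_sq (W.measurableSet_Y_eq_zero _) (W.measureReal_Y_eq_zero i)

lemma Zstar_succ_sub (W : RandomStepSizes P b) (m : ℕ) (ω : Ω) :
    W.Zstar (m + 1) ω - m * (1 - b) = 1 + ∑ i ∈ Finset.range m, W.centeredMove i ω := by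
  have hmove : ∀ i, W.centeredMove i ω = (if W.Y (i + 2) ω = 0 then 0 else 1) - (1 - b) := by
    intro i
    by_cases h : W.Y (i + 2) ω = 0 <;> simp [centeredMove, h]
  rw [Zstar, ← Finset.Ico_add_one_right_eq_Icc, Finset.sum_Ico_eq_sum_range]
  simp only [hmove, Finset.sum_sub_distrib, Finset.sum_const, Finset.card_range, nsmul_eq_mul]
  simp only [add_comm 2, show m + 1 + 1 - 2 = m by omega]
  ring

end RandomStepSizes

/-- The quadratic strong law for the number of moves:
`(1/log(n+1)) ∑_{k=1}^n (Z_k* - (k-1)(1-b))²/(k(k+1)) → b(1-b)` almost surely. -/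
theorem randomStepSizes_moves_qsl
    {Ω : Type*} [MeasurableSpace Ω] {P : Measure Ω} [IsProbabilityMeasure P]
    {b : ℝ} (W : RandomStepSizes P b) :
    ∀ᵐ ω ∂P,
      Tendsto (fun n : ℕ =>
          (1 / Real.log ((n : ℝ) + 1)) *
            ∑ k ∈ Finset.Icc 1 n,
              (W.Zstar k ω - ((k : ℝ) - 1) * (1 - b)) ^ 2 / ((k : ℝ) * ((k : ℝ) + 1)))
        atTop (nhds (b * (1 - b))) := by
  filter_upwards [W.isBoundedCenteredIndep_centeredMove.ae_tendsto_sum_sq_div_log 1] with ω hω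
  refine hω.congr fun n => ?_
  rw [one_div_mul_eq_div, Finset.range_eq_Ico, ← Finset.Ico_add_one_right_eq_Icc,
    ← Finset.sum_Ico_add' _ 0 n 1]
  refine congrArg (· / _) (Finset.sum_congr rfl fun m _ => ?_)
  rw [← W.Zstar_succ_sub]
  push_cast
  ring_nf
end
end
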